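/- arXiv:2001.01713 — 2 statements merged into one kernel-verified Lean document; each statement's English description precedes it below -/
import Mathlib

section
/- Let ε be a uniformly random permutation of {1,…,N} and let 1 ≤ m ≤ N. Then the random variables B(ε) = Σ_{k=1}^{m} X_k(ε) and I(ε) = Σ_{k=m+1}^{N} X_k(ε) are independent; moreover B(ε) has the same distribution as a sum of independent Bernoulli random variables with success probabilities 1, 1/2, …, 1/m, i.e. the same distribution as the number of cycles of a uniformly random permutation of {1,…,m}. -/
/-!
Short-circuiting the largest point `N` out of its cycle is a bijection
`Perm (Fin (N + 1)) ≃ Fin (N + 1) × Perm (Fin N)`, recording `σ (last N)` as the first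
component.
It does not change which `k < N` are cycle minima, and `last N` is a cycle minimum exactly when
`σ (last N) = last N`. Iterating from `N` down to `m` gives a bijection
`Perm (Fin N) ≃ Perm (Fin m) × β` under which `B` is the number of cycles of the first component
and `I` is a function of the second. A bijection carries the uniform measure to the product of the
uniform measures, so `B` and `I` are independent and `B` has the law of the number of cycles of a
uniform permutation of `Fin m`.
-/

open MeasureTheory ProbabilityTheory

instance permMeasurableSpace {N : ℕ} : MeasurableSpace (Equiv.Perm (Fin N)) := ⊤

/-- `X σ k = 1` iff `k` is the smallest element of the cycle of `σ` containing `k`. -/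
def X {N : ℕ} (σ : Equiv.Perm (Fin N)) (k : Fin N) : ℕ :=
  if ∀ j : Fin N, σ.SameCycle k j → k ≤ j then 1 else 0

/-- The total number of cycles of a permutation (fixed points included). -/
noncomputable def numCycles {N : ℕ} (σ : Equiv.Perm (Fin N)) : ℕ :=
  Nat.card (Quotient (Equiv.Perm.SameCycle.setoid σ))

open Equiv Finset

namespace Equiv.Perm

variable {α β : Type*}

theorem SameCycle.map_of_sameCycle_apply {σ : Perm α} {τ : Perm β} {g : α → β}
    (hg : ∀ x, τ.SameCycle (g x) (g (σ x))) {x y : α} (h : σ.SameCycle x y) :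
    τ.SameCycle (g x) (g y) := by
  obtain ⟨k, rfl⟩ := h
  induction k using Int.induction_on with
  | zero => exact SameCycle.refl _ _
  | succ k ih =>
    have hk : (σ ^ ((k : ℤ) + 1)) x = σ ((σ ^ (k : ℤ)) x) := by
      rw [add_comm, zpow_add, zpow_one, Perm.mul_apply]
    exact hk ▸ ih.trans (hg _)
  | pred k ih =>
    have hk : (σ ^ (-(k : ℤ))) x = σ ((σ ^ (-(k : ℤ) - 1)) x) := by
      rw [← Perm.mul_apply, ← zpow_one_add, add_sub_cancel]
    exact ih.trans (hk ▸ hg _).symm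

variable {n : ℕ}

def decomposeFinLast : Perm (Fin (n + 1)) ≃ Fin (n + 1) × Perm (Fin n) :=
  ((permCongr finSuccEquivLast).trans decomposeOption).trans
    (prodCongr finSuccEquivLast.symm (Equiv.refl _))

@[simp]
theorem decomposeFinLast_symm_apply_last (p : Fin (n + 1)) (σ : Perm (Fin n)) :
    decomposeFinLast.symm (p, σ) (Fin.last n) = p := by
  simp [decomposeFinLast, permCongr_apply]

theorem decomposeFinLast_symm_apply_castSucc (p : Fin (n + 1)) (σ : Perm (Fin n)) (i : Fin n) :
    decomposeFinLast.symm (p, σ) i.castSucc =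
      if (σ i).castSucc = p then Fin.last n else (σ i).castSucc := by
  split_ifs with h
  · simp [decomposeFinLast, permCongr_apply, ← h]
  · have hne : some (σ i) ≠ finSuccEquivLast p := by
      rw [← finSuccEquivLast_castSucc]
      exact finSuccEquivLast.injective.ne h
    simp [decomposeFinLast, permCongr_apply, swap_apply_of_ne_of_ne, hne]

theorem SameCycle.decomposeFinLast_symm_castSucc {p : Fin (n + 1)} {σ : Perm (Fin n)}
    {x y : Fin n} (h : σ.SameCycle x y) :
    (decomposeFinLast.symm (p, σ)).SameCycle x.castSucc y.castSucc := by
  set τ := decomposeFinLast.symm (p, σ)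
  refine h.map_of_sameCycle_apply fun z => ?_
  by_cases hzp : (σ z).castSucc = p
  · have h2 : τ (τ z.castSucc) = (σ z).castSucc := by
      simp [τ, decomposeFinLast_symm_apply_castSucc, hzp]
    exact h2 ▸ (SameCycle.refl τ _).apply_right.apply_right
  · have h1 : τ z.castSucc = (σ z).castSucc := by
      simp [τ, decomposeFinLast_symm_apply_castSucc, hzp]
    exact h1 ▸ (SameCycle.refl τ _).apply_right

theorem SameCycle.of_decomposeFinLast_symm_castSucc {p : Fin (n + 1)} {σ : Perm (Fin n)}
    {x y : Fin n} (h : (decomposeFinLast.symm (p, σ)).SameCycle x.castSucc y.castSucc) :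
    σ.SameCycle x y := by
  set τ := decomposeFinLast.symm (p, σ)
  obtain ⟨d, hd⟩ : ∃ d : Fin n, p ≠ Fin.last n → p = d.castSucc := by
    by_cases hp : p = Fin.last n
    · exact ⟨x, fun h => absurd hp h⟩
    · exact ⟨p.castPred hp, fun _ => (Fin.castSucc_castPred p hp).symm⟩
  -- `g` sends `last n` to its image `τ (last n)` (when that is not `last n` itself), and under
  -- this identification `τ` moves every point to a point of the same `σ`-cycle
  let g : Fin (n + 1) → Fin n := fun u => if hu : u = Fin.last n then d else u.castPred hu
  have hg_p : g p = d := by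
    by_cases hp : p = Fin.last n
    · simp [g, hp]
    · simp [g, hd hp]
  have hstep : ∀ u, σ.SameCycle (g u) (g (τ u)) := by
    intro u
    induction u using Fin.lastCases with
    | last => simpa [τ, hg_p, g] using SameCycle.refl σ d
    | cast z =>
      have hz : g z.castSucc = z := by simp [g]
      rw [decomposeFinLast_symm_apply_castSucc, hz]
      split_ifs with hzp
      · have hσz : σ z = d :=
          Fin.castSucc_injective n (hzp.trans (hd (hzp ▸ Fin.castSucc_ne_last _)))
        simpa [g, hσz] using (SameCycle.refl σ z).apply_right
      · simpa [g] using (SameCycle.refl σ z).apply_right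
  simpa [g] using h.map_of_sameCycle_apply hstep

theorem sameCycle_decomposeFinLast_symm_castSucc {p : Fin (n + 1)} {σ : Perm (Fin n)}
    {x y : Fin n} :
    (decomposeFinLast.symm (p, σ)).SameCycle x.castSucc y.castSucc ↔ σ.SameCycle x y :=
  ⟨SameCycle.of_decomposeFinLast_symm_castSucc, SameCycle.decomposeFinLast_symm_castSucc⟩

end Equiv.Perm

open Equiv.Perm

section CycleMinima

variable {n : ℕ}

theorem X_decomposeFinLast_symm_castSucc (p : Fin (n + 1)) (σ : Perm (Fin n)) (k : Fin n) :
    X (decomposeFinLast.symm (p, σ)) k.castSucc = X σ k := by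
  unfold X
  refine if_congr ⟨fun h j hj => ?_, fun h j hj => ?_⟩ rfl rfl
  · exact Fin.castSucc_le_castSucc_iff.1 (h _ (sameCycle_decomposeFinLast_symm_castSucc.2 hj))
  · induction j using Fin.lastCases with
    | last => exact Fin.le_last _
    | cast i =>
      exact Fin.castSucc_le_castSucc_iff.2 (h i (sameCycle_decomposeFinLast_symm_castSucc.1 hj))

theorem X_decomposeFinLast_symm_last (p : Fin (n + 1)) (σ : Perm (Fin n)) :
    X (decomposeFinLast.symm (p, σ)) (Fin.last n) = if p = Fin.last n then 1 else 0 := by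
  unfold X
  refine if_congr ⟨fun h => ?_, fun hp j hj => ?_⟩ rfl rfl
  · exact Fin.last_le_iff.1 (h p (by
      simpa using (SameCycle.refl (decomposeFinLast.symm (p, σ)) (Fin.last n)).apply_right))
  · exact (hj.eq_of_left (by simp [Function.IsFixedPt, hp])).le

theorem sum_filter_X_decomposeFinLast_symm (P : ℕ → Prop) [DecidablePred P] (p : Fin (n + 1))
    (σ : Perm (Fin n)) :
    ∑ k ∈ univ.filter (fun k : Fin (n + 1) => P k), X (decomposeFinLast.symm (p, σ)) k =
      ∑ k ∈ univ.filter (fun k : Fin n => P k), X σ k +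
        if P n ∧ p = Fin.last n then 1 else 0 := by
  simp [Finset.sum_filter, Fin.sum_univ_castSucc, X_decomposeFinLast_symm_castSucc,
    X_decomposeFinLast_symm_last, ite_and]

theorem sum_X_eq_numCycles (σ : Perm (Fin n)) : ∑ k, X σ k = numCycles σ := by
  classical
  let IsMin : Fin n → Prop := fun k => ∀ j, σ.SameCycle k j → k ≤ j
  have hbij : Function.Bijective
      (fun k : {k // IsMin k} => (Quotient.mk (SameCycle.setoid σ) k.1)) := by
    refine ⟨fun k l hkl => Subtype.ext ?_, fun q => ?_⟩
    · have h : σ.SameCycle k l := Quotient.exact hkl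
      exact le_antisymm (k.2 _ h) (l.2 _ h.symm)
    · induction q using Quotient.inductionOn with
      | h a =>
        obtain ⟨k, hk, hmin⟩ :=
          (univ.filter (σ.SameCycle a)).exists_min_image id ⟨a, by simp [SameCycle.refl]⟩
        simp only [mem_filter, mem_univ, true_and, id] at hk hmin
        exact ⟨⟨k, fun j hj => hmin j (hk.trans hj)⟩, Quotient.sound hk.symm⟩
  rw [numCycles, ← Nat.card_eq_of_bijective _ hbij, Nat.card_eq_fintype_card,
    Fintype.card_subtype, Finset.card_filter]
  rfl

end CycleMinima

theorem ProbabilityTheory.IndepFun.comp_of_map {Ω Ω' β γ : Type*} {mΩ : MeasurableSpace Ω}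
    {mΩ' : MeasurableSpace Ω'} {mβ : MeasurableSpace β} {mγ : MeasurableSpace γ}
    {μ : Measure Ω} {Φ : Ω → Ω'} {f : Ω' → β} {g : Ω' → γ} (hΦ : Measurable Φ)
    (hf : Measurable f) (hg : Measurable g) (h : IndepFun f g (μ.map Φ)) :
    IndepFun (f ∘ Φ) (g ∘ Φ) μ := by
  rw [indepFun_iff_measure_inter_preimage_eq_mul] at h ⊢
  intro s t hs ht
  have := h s t hs ht
  rwa [Measure.map_apply hΦ ((hf hs).inter (hg ht)), Measure.map_apply hΦ (hf hs),
    Measure.map_apply hΦ (hg ht)] at this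

section UniformProduct

variable {Ω α β γ δ : Type*} [Fintype Ω] [Fintype α] [Fintype β] [Nonempty Ω] [Nonempty α]
  [Nonempty β] [MeasurableSpace Ω] [MeasurableSpace α] [MeasurableSpace β] [MeasurableSpace γ]
  [MeasurableSpace δ] [DiscreteMeasurableSpace Ω] [DiscreteMeasurableSpace α]
  [DiscreteMeasurableSpace β]

theorem PMF.map_toMeasure_uniformOfFintype (e : α ≃ β) :
    (PMF.uniformOfFintype α).toMeasure.map e = (PMF.uniformOfFintype β).toMeasure := by
  refine Measure.ext_iff_singleton.2 fun b => ?_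
  rw [Measure.map_apply Measurable.of_discrete MeasurableSet.of_discrete,
    ← e.image_symm_eq_preimage, Set.image_singleton,
    PMF.toMeasure_apply_singleton _ _ MeasurableSet.of_discrete,
    PMF.toMeasure_apply_singleton _ _ MeasurableSet.of_discrete, PMF.uniformOfFintype_apply,
    PMF.uniformOfFintype_apply, Fintype.card_congr e]

theorem PMF.toMeasure_uniformOfFintype_prod :
    (PMF.uniformOfFintype (α × β)).toMeasure =
      (PMF.uniformOfFintype α).toMeasure.prod (PMF.uniformOfFintype β).toMeasure := by
  refine Measure.ext_iff_singleton.2 fun ⟨a, b⟩ => ?_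
  rw [PMF.toMeasure_apply_singleton _ _ MeasurableSet.of_discrete,
    ← Set.singleton_prod_singleton, Measure.prod_prod,
    PMF.toMeasure_apply_singleton _ _ MeasurableSet.of_discrete,
    PMF.toMeasure_apply_singleton _ _ MeasurableSet.of_discrete, PMF.uniformOfFintype_apply,
    PMF.uniformOfFintype_apply, PMF.uniformOfFintype_apply, Fintype.card_prod, Nat.cast_mul,
    ENNReal.mul_inv (.inr (ENNReal.natCast_ne_top _)) (.inl (ENNReal.natCast_ne_top _))]

theorem PMF.map_toMeasure_uniformOfFintype_equiv_prod (Φ : Ω ≃ α × β) :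
    (PMF.uniformOfFintype Ω).toMeasure.map Φ =
      (PMF.uniformOfFintype α).toMeasure.prod (PMF.uniformOfFintype β).toMeasure := by
  rw [PMF.map_toMeasure_uniformOfFintype, PMF.toMeasure_uniformOfFintype_prod]

theorem indepFun_uniformOfFintype_of_equiv_prod (Φ : Ω ≃ α × β) (F : α → γ) (G : β → δ) :
    IndepFun (fun ω => F (Φ ω).1) (fun ω => G (Φ ω).2)
      (PMF.uniformOfFintype Ω).toMeasure := by
  have hprod : IndepFun (fun x : α × β => F x.1) (fun x => G x.2)
      ((PMF.uniformOfFintype Ω).toMeasure.map Φ) := by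
    rw [PMF.map_toMeasure_uniformOfFintype_equiv_prod]
    exact indepFun_prod Measurable.of_discrete Measurable.of_discrete
  exact hprod.comp_of_map Measurable.of_discrete Measurable.of_discrete Measurable.of_discrete

theorem map_uniformOfFintype_of_equiv_prod (Φ : Ω ≃ α × β) (F : α → γ) :
    (PMF.uniformOfFintype Ω).toMeasure.map (fun ω => F (Φ ω).1) =
      (PMF.uniformOfFintype α).toMeasure.map F := by
  have : (fun ω => F (Φ ω).1) = (F ∘ Prod.fst) ∘ Φ := rfl
  rw [this, ← Measure.map_map Measurable.of_discrete Measurable.of_discrete,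
    PMF.map_toMeasure_uniformOfFintype_equiv_prod, ← Measure.map_map Measurable.of_discrete
    measurable_fst, Measure.map_fst_prod, measure_univ, one_smul]

end UniformProduct

instance {N : ℕ} : DiscreteMeasurableSpace (Perm (Fin N)) :=
  ⟨fun _ => MeasurableSpace.measurableSet_top⟩

theorem exists_equiv_prod_cycleMinima (m : ℕ) :
    ∀ N, m ≤ N → ∃ (β : Type) (_ : Fintype β) (Φ : Perm (Fin N) ≃ Perm (Fin m) × β)
      (G : β → ℕ),
      (fun σ : Perm (Fin N) => ∑ k ∈ univ.filter (fun k : Fin N => (k : ℕ) < m), X σ k) =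
          (fun σ => ∑ k, X (Φ σ).1 k) ∧
        (fun σ : Perm (Fin N) => ∑ k ∈ univ.filter (fun k : Fin N => m ≤ (k : ℕ)), X σ k) =
          (fun σ => G (Φ σ).2) := by
  refine Nat.le_induction ⟨PUnit, inferInstance, (prodPUnit _).symm, fun _ => 0, ?_, ?_⟩ ?_
  · funext σ
    simp [Finset.filter_true_of_mem]
  · funext σ
    simp [Finset.filter_false_of_mem]
  · rintro N hmN ⟨β, _, Φ, G, hlow, hhigh⟩
    refine ⟨β × Fin (N + 1), inferInstance,
      decomposeFinLast.trans ((prodComm _ _).trans ((prodCongr Φ (Equiv.refl _)).trans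
        (prodAssoc _ _ _))),
      fun b => G b.1 + if b.2 = Fin.last N then 1 else 0, ?_, ?_⟩
    · funext σ
      obtain ⟨⟨p, τ⟩, rfl⟩ := decomposeFinLast.symm.surjective σ
      simpa [← congrFun hlow τ, hmN.not_gt] using
        sum_filter_X_decomposeFinLast_symm (· < m) p τ
    · funext σ
      obtain ⟨⟨p, τ⟩, rfl⟩ := decomposeFinLast.symm.surjective σ
      simpa [← congrFun hhigh τ, hmN] using
        sum_filter_X_decomposeFinLast_symm (m ≤ ·) p τ

theorem stmt_5_general (N m : ℕ) (hmN : m ≤ N) :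
    IndepFun
        (fun σ : Equiv.Perm (Fin N) => ∑ k ∈ Finset.univ.filter (fun k : Fin N => (k : ℕ) < m), X σ k)
        (fun σ : Equiv.Perm (Fin N) => ∑ k ∈ Finset.univ.filter (fun k : Fin N => m ≤ (k : ℕ)), X σ k)
        (PMF.uniformOfFintype (Equiv.Perm (Fin N))).toMeasure ∧
      Measure.map
          (fun σ : Equiv.Perm (Fin N) => ∑ k ∈ Finset.univ.filter (fun k : Fin N => (k : ℕ) < m), X σ k)
          (PMF.uniformOfFintype (Equiv.Perm (Fin N))).toMeasure
        = Measure.map (fun π : Equiv.Perm (Fin m) => numCycles π)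
            (PMF.uniformOfFintype (Equiv.Perm (Fin m))).toMeasure := by
  obtain ⟨β, _, Φ, G, hlow, hhigh⟩ := exists_equiv_prod_cycleMinima m N hmN
  let _ : MeasurableSpace β := ⊤
  have : DiscreteMeasurableSpace β := ⟨fun _ => MeasurableSpace.measurableSet_top⟩
  have : Nonempty β := ⟨(Φ 1).2⟩
  rw [hlow, hhigh]
  refine ⟨indepFun_uniformOfFintype_of_equiv_prod Φ (fun π => ∑ k, X π k) G, ?_⟩
  rw [map_uniformOfFintype_of_equiv_prod Φ (fun π => ∑ k, X π k)]
  simp_rw [sum_X_eq_numCycles]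

/-- For `ε` uniform on the permutations of `{1,…,N}` and `1 ≤ m ≤ N`,
the random variables `B(ε) = Σ_{k=1}^m X_k(ε)` and `I(ε) = Σ_{k=m+1}^N X_k(ε)` are
independent, and `B(ε)` is distributed as the number of cycles of a uniformly random
permutation of `{1,…,m}` (equivalently, as a sum of independent Bernoullis with success
probabilities `1, 1/2, …, 1/m`). -/
theorem stmt_5 (N m : ℕ) (hm : 1 ≤ m) (hmN : m ≤ N) :
    IndepFun
        (fun σ : Equiv.Perm (Fin N) => ∑ k ∈ Finset.univ.filter (fun k : Fin N => (k : ℕ) < m), X σ k)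
        (fun σ : Equiv.Perm (Fin N) => ∑ k ∈ Finset.univ.filter (fun k : Fin N => m ≤ (k : ℕ)), X σ k)
        (PMF.uniformOfFintype (Equiv.Perm (Fin N))).toMeasure ∧
      Measure.map
          (fun σ : Equiv.Perm (Fin N) => ∑ k ∈ Finset.univ.filter (fun k : Fin N => (k : ℕ) < m), X σ k)
          (PMF.uniformOfFintype (Equiv.Perm (Fin N))).toMeasure
        = Measure.map (fun π : Equiv.Perm (Fin m) => numCycles π)
            (PMF.uniformOfFintype (Equiv.Perm (Fin m))).toMeasure :=
  stmt_5_general N m hmN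
end

section
/- Let 1 ≤ m ≤ n with n ≥ 2, let σ be distributed uniformly on the even permutations of {1,…,n}, and let τ = τ_m(σ) be the induced permutation of {1,…,m}. Then the total variation distance between the law of τ and the uniform distribution on the symmetric group S_m equals m(m−1)/(2n(n−1)). In particular, for any m = m(n) with m/n → 0 (e.g., m fixed), τ converges in total variation to a uniformly random permutation of {1,…,m} as n → ∞. -/
set_option linter.unnecessarySimpa false

/-- The first-return time of `σ` to `{0,…,m-1}` starting at `i` is well defined. -/
theorem exists_return {n m : ℕ} (h : m ≤ n) (σ : Equiv.Perm (Fin n)) (i : Fin m) :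
    ∃ j : ℕ, 0 < j ∧ (((σ ^ j) (Fin.castLE h i) : Fin n) : ℕ) < m :=
  ⟨orderOf σ, orderOf_pos σ, by rw [pow_orderOf_eq_one]; simpa using i.isLt⟩

/-- The first-return map `τ_m(σ) : i ↦ σ^{j(i)}(i)` with
`j(i) = min { j ≥ 1 : σ^j(i) ∈ {0,…,m-1} }`. -/
def tauFun {n m : ℕ} (h : m ≤ n) (σ : Equiv.Perm (Fin n)) (i : Fin m) : Fin m :=
  ⟨(((σ ^ Nat.find (exists_return h σ i)) (Fin.castLE h i) : Fin n) : ℕ),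
    (Nat.find_spec (exists_return h σ i)).2⟩

theorem tauFun_injAux {n m : ℕ} (h : m ≤ n) (σ : Equiv.Perm (Fin n)) (i i' : Fin m)
    (hle : Nat.find (exists_return h σ i) ≤ Nat.find (exists_return h σ i'))
    (heq : tauFun h σ i = tauFun h σ i') : i = i' := by
  set j := Nat.find (exists_return h σ i) with hj
  set j' := Nat.find (exists_return h σ i') with hj'
  have hx : (σ ^ j) (Fin.castLE h i) = (σ ^ j') (Fin.castLE h i') := by
    have := congrArg Fin.val heq
    simpa [tauFun, Fin.ext_iff] using this
  have hd : (σ ^ (j' - j)) (Fin.castLE h i') = Fin.castLE h i := by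
    apply (σ ^ j).injective
    rw [← Equiv.Perm.mul_apply, ← pow_add, Nat.add_sub_cancel' hle]
    exact hx.symm
  rcases Nat.eq_or_lt_of_le hle with hjj | hlt
  · have : Fin.castLE h i = Fin.castLE h i' := by
      apply (σ ^ j).injective
      rw [hx, hjj]
    exact Fin.castLE_injective h this
  · exfalso
    have hpos : 0 < j := (Nat.find_spec (exists_return h σ i)).1
    have hdlt : j' - j < j' := by omega
    refine Nat.find_min (exists_return h σ i') hdlt ⟨by omega, ?_⟩
    rw [hd]; simpa using i.isLt

theorem tauFun_inj {n m : ℕ} (h : m ≤ n) (σ : Equiv.Perm (Fin n)) :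
    Function.Injective (tauFun h σ) := by
  intro i i' heq
  rcases le_total (Nat.find (exists_return h σ i)) (Nat.find (exists_return h σ i')) with hle | hle
  · exact tauFun_injAux h σ i i' hle heq
  · exact (tauFun_injAux h σ i' i hle heq.symm).symm

/-- The induced permutation `τ_m(σ)` of `{0,…,m-1}`, obtained by deleting the elements
`{m,…,n-1}` from the cycles of `σ` (the first-return map of `σ` to `{0,…,m-1}`). -/
noncomputable def tau {n m : ℕ} (h : m ≤ n) (σ : Equiv.Perm (Fin n)) : Equiv.Perm (Fin m) :=
  Equiv.ofBijective (tauFun h σ) (Finite.injective_iff_bijective.mp (tauFun_inj h σ))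

-- ===== new material =====

theorem tau_apply {n m : ℕ} (h : m ≤ n) (σ : Equiv.Perm (Fin n)) (i : Fin m) :
    tau h σ i = tauFun h σ i := rfl

theorem castLE_tauFun {n m : ℕ} (h : m ≤ n) (σ : Equiv.Perm (Fin n)) (i : Fin m) :
    Fin.castLE h (tauFun h σ i)
      = (σ ^ Nat.find (exists_return h σ i)) (Fin.castLE h i) :=
  Fin.ext rfl

theorem find_eq {n m : ℕ} (h : m ≤ n) (σ : Equiv.Perm (Fin n)) (i : Fin m) {J : ℕ}
    (hJ : 0 < J) (hlt : (((σ ^ J) (Fin.castLE h i) : Fin n) : ℕ) < m)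
    (hmin : ∀ j, 0 < j → j < J → ¬ ((((σ ^ j) (Fin.castLE h i) : Fin n) : ℕ) < m)) :
    Nat.find (exists_return h σ i) = J := by
  rw [Nat.find_eq_iff]
  refine ⟨⟨hJ, hlt⟩, fun j hj hc => ?_⟩
  rcases Nat.eq_zero_or_pos j with rfl | hj0
  · exact absurd hc.1 (lt_irrefl 0)
  · exact hmin j hj0 hj hc.2

section trans

variable {n k : ℕ} (hkn : k ≤ n) (σ : Equiv.Perm (Fin n))

/-- cumulative return times of the orbit of `i` to `{0,…,k-1}` -/
noncomputable def gtime (i : Fin k) (s : ℕ) : ℕ :=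
  Nat.rec 0 (fun s g => g + Nat.find (exists_return hkn σ (((tau hkn σ) ^ s) i))) s

theorem gtime_zero (i : Fin k) : gtime hkn σ i 0 = 0 := rfl

theorem gtime_succ (i : Fin k) (s : ℕ) :
    gtime hkn σ i (s + 1)
      = gtime hkn σ i s + Nat.find (exists_return hkn σ (((tau hkn σ) ^ s) i)) := rfl

theorem gtime_spec (i : Fin k) (s : ℕ) :
    Fin.castLE hkn (((tau hkn σ) ^ s) i) = (σ ^ gtime hkn σ i s) (Fin.castLE hkn i) := by
  induction s with
  | zero => simp [gtime_zero]
  | succ s ih =>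
      have h1 : ((tau hkn σ) ^ (s+1)) i = tauFun hkn σ (((tau hkn σ) ^ s) i) := by
        rw [pow_succ']; rfl
      rw [gtime_succ, h1, castLE_tauFun]
      set F := Nat.find (exists_return hkn σ (((tau hkn σ) ^ s) i)) with hF
      rw [ih, ← Equiv.Perm.mul_apply, ← pow_add, Nat.add_comm]

theorem gtime_strictMono (i : Fin k) : StrictMono (gtime hkn σ i) := by
  apply strictMono_nat_of_lt_succ
  intro s
  have := (Nat.find_spec (exists_return hkn σ (((tau hkn σ) ^ s) i))).1
  rw [gtime_succ]; omega

theorem gtime_gap (i : Fin k) (s j : ℕ) (h1 : gtime hkn σ i s < j)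
    (h2 : j < gtime hkn σ i (s + 1)) :
    ¬ (((σ ^ j) (Fin.castLE hkn i) : Fin n) : ℕ) < k := by
  intro hc
  have hgs := gtime_succ hkn σ i s
  have hd1 : 0 < j - gtime hkn σ i s := by omega
  have hd2 : j - gtime hkn σ i s
      < Nat.find (exists_return hkn σ (((tau hkn σ) ^ s) i)) := by omega
  refine Nat.find_min (exists_return hkn σ (((tau hkn σ) ^ s) i)) hd2 ⟨hd1, ?_⟩
  have heq : (σ ^ (j - gtime hkn σ i s)) (Fin.castLE hkn (((tau hkn σ) ^ s) i))
      = (σ ^ j) (Fin.castLE hkn i) := by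
    rw [gtime_spec, ← Equiv.Perm.mul_apply, ← pow_add]
    have hje : j - gtime hkn σ i s + gtime hkn σ i s = j := by omega
    rw [hje]
  rw [heq]
  exact hc

theorem gtime_mem (i : Fin k) (s j : ℕ) (hle : j ≤ gtime hkn σ i s)
    (hc : (((σ ^ j) (Fin.castLE hkn i) : Fin n) : ℕ) < k) :
    ∃ t, t ≤ s ∧ gtime hkn σ i t = j := by
  induction s with
  | zero =>
      have h0 : j = 0 := by
        have := gtime_zero hkn σ i
        omega
      exact ⟨0, le_refl _, by rw [gtime_zero, h0]⟩
  | succ s ih =>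
      rcases le_or_gt j (gtime hkn σ i s) with h | h
      · obtain ⟨t, ht, hgt⟩ := ih h
        exact ⟨t, ht.trans (Nat.le_succ s), hgt⟩
      · rcases Nat.lt_or_ge j (gtime hkn σ i (s+1)) with h2 | h2
        · exact absurd hc (gtime_gap hkn σ i s j h h2)
        · exact ⟨s + 1, le_refl _, le_antisymm h2 hle⟩

theorem tau_trans {m : ℕ} (hmk : m ≤ k) :
    tau hmk (tau hkn σ) = tau (hmk.trans hkn) σ := by
  apply Equiv.ext
  intro i
  set σ' := tau hkn σ with hσ'
  set i' := Fin.castLE hmk i with hi'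
  set t := Nat.find (exists_return hmk σ' i) with ht
  have htpos : 0 < t := (Nat.find_spec (exists_return hmk σ' i)).1
  have htval : (((σ' ^ t) i' : Fin k) : ℕ) < m := (Nat.find_spec (exists_return hmk σ' i)).2
  have hcast : Fin.castLE hkn i' = Fin.castLE (hmk.trans hkn) i := Fin.ext rfl
  have hfind : Nat.find (exists_return (hmk.trans hkn) σ i) = gtime hkn σ i' t := by
    apply find_eq
    · have h01 := gtime_strictMono hkn σ i' (show (0:ℕ) < t from htpos)
      have h00 := gtime_zero hkn σ i'
      omega
    · rw [← hcast, ← gtime_spec]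
      simpa using htval
    · intro j hj0 hjlt hc
      have hck : (((σ ^ j) (Fin.castLE hkn i') : Fin n) : ℕ) < k := by
        rw [hcast]; exact lt_of_lt_of_le hc hmk
      obtain ⟨t', ht'le, hgt'⟩ := gtime_mem hkn σ i' t j hjlt.le hck
      have ht'pos : 0 < t' := by
        have := gtime_zero hkn σ i'
        rcases Nat.eq_zero_or_pos t' with rfl | hp
        · omega
        · exact hp
      have ht'lt : t' < t := by
        rcases Nat.lt_or_ge t' t with hlt | hge
        · exact hlt
        · exfalso
          have := (gtime_strictMono hkn σ i').monotone hge
          omega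
      refine Nat.find_min (exists_return hmk σ' i) ht'lt ⟨ht'pos, ?_⟩
      show (((σ' ^ t') i' : Fin k) : ℕ) < m
      have hval : (((σ' ^ t') i' : Fin k) : ℕ)
          = (((σ ^ j) (Fin.castLE (hmk.trans hkn) i) : Fin n) : ℕ) := by
        rw [← hcast, ← hgt', ← gtime_spec]
        rfl
      rw [hval]
      exact hc
  show tauFun hmk σ' i = tauFun (hmk.trans hkn) σ i
  apply Fin.ext
  show (((σ' ^ t) i' : Fin k) : ℕ)
      = (((σ ^ Nat.find (exists_return (hmk.trans hkn) σ i)) (Fin.castLE (hmk.trans hkn) i) : Fin n) : ℕ)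
  rw [hfind, ← hcast, ← gtime_spec]
  rfl

end trans

section delete

open Equiv Equiv.Perm

variable {n : ℕ}

theorem permCongr_some (σ : Equiv.Perm (Fin (n+1))) (x : Fin n) :
    (finSuccEquivLast.permCongr σ) (some x) = finSuccEquivLast (σ x.castSucc) := by
  simp [Equiv.permCongr_apply]

theorem permCongr_none (σ : Equiv.Perm (Fin (n+1))) :
    (finSuccEquivLast.permCongr σ) none = finSuccEquivLast (σ (Fin.last n)) := by
  simp [Equiv.permCongr_apply]

theorem removeNone_eq_tau (σ : Equiv.Perm (Fin (n+1))) :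
    Equiv.removeNone (finSuccEquivLast.permCongr σ) = tau (Nat.le_succ n) σ := by
  apply Equiv.ext
  intro x
  have hcast : Fin.castLE (Nat.le_succ n) x = x.castSucc := Fin.ext rfl
  by_cases hσ : σ x.castSucc = Fin.last n
  · -- deleted element is hit: two steps
    have hxne : x.castSucc ≠ Fin.last n := Fin.ne_of_lt (Fin.castSucc_lt_last x)
    have hlne : σ (Fin.last n) ≠ Fin.last n := by
      intro hc
      exact hxne (σ.injective (hσ.trans hc.symm))
    have hzlt : ((σ (Fin.last n) : Fin (n+1)) : ℕ) < n := by
      have := (σ (Fin.last n)).isLt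
      have : ((σ (Fin.last n) : Fin (n+1)) : ℕ) ≠ n := fun hc => hlne (Fin.ext hc)
      omega
    set z : Fin n := ⟨((σ (Fin.last n) : Fin (n+1)) : ℕ), hzlt⟩ with hz
    have hzc : σ (Fin.last n) = z.castSucc := Fin.ext rfl
    -- removeNone value
    have h1 : (finSuccEquivLast.permCongr σ) (some x) = none := by
      rw [permCongr_some, hσ, finSuccEquivLast_last]
    have h2 : some (Equiv.removeNone (finSuccEquivLast.permCongr σ) x)
        = (finSuccEquivLast.permCongr σ) none := Equiv.removeNone_none _ h1
    rw [permCongr_none, hzc, finSuccEquivLast_castSucc] at h2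
    have hrem : Equiv.removeNone (finSuccEquivLast.permCongr σ) x = z :=
      Option.some_injective _ h2
    -- tau value
    have hfind : Nat.find (exists_return (Nat.le_succ n) σ x) = 2 := by
      apply find_eq
      · omega
      · have : (σ ^ 2) (Fin.castLE (Nat.le_succ n) x) = σ (Fin.last n) := by
          rw [hcast, pow_two, Equiv.Perm.mul_apply, hσ]
        rw [this]
        exact hzlt
      · intro j hj0 hj2 hc
        have hj1 : j = 1 := by omega
        rw [hj1, pow_one, hcast, hσ, Fin.val_last] at hc
        omega
    have : tau (Nat.le_succ n) σ x = z := by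
      apply Fin.ext
      show (((σ ^ Nat.find (exists_return (Nat.le_succ n) σ x)) (Fin.castLE (Nat.le_succ n) x)
          : Fin (n+1)) : ℕ) = (z : ℕ)
      rw [hfind, hcast, pow_two, Equiv.Perm.mul_apply, hσ, hzc]
      rfl
    rw [hrem, this]
  · -- one step
    have hylt : ((σ x.castSucc : Fin (n+1)) : ℕ) < n := by
      have := (σ x.castSucc).isLt
      have : ((σ x.castSucc : Fin (n+1)) : ℕ) ≠ n := fun hc => hσ (Fin.ext hc)
      omega
    set y : Fin n := ⟨((σ x.castSucc : Fin (n+1)) : ℕ), hylt⟩ with hy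
    have hyc : σ x.castSucc = y.castSucc := Fin.ext rfl
    have h1 : (finSuccEquivLast.permCongr σ) (some x) = some y := by
      rw [permCongr_some, hyc, finSuccEquivLast_castSucc]
    have h2 : some (Equiv.removeNone (finSuccEquivLast.permCongr σ) x)
        = (finSuccEquivLast.permCongr σ) (some x) := Equiv.removeNone_some _ ⟨y, h1⟩
    rw [h1] at h2
    have hrem : Equiv.removeNone (finSuccEquivLast.permCongr σ) x = y :=
      Option.some_injective _ h2
    have hfind : Nat.find (exists_return (Nat.le_succ n) σ x) = 1 := by
      apply find_eq
      · omega
      · rw [pow_one, hcast]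
        exact hylt
      · intro j hj0 hj1 hc
        omega
    have : tau (Nat.le_succ n) σ x = y := by
      apply Fin.ext
      show (((σ ^ Nat.find (exists_return (Nat.le_succ n) σ x)) (Fin.castLE (Nat.le_succ n) x)
          : Fin (n+1)) : ℕ) = (y : ℕ)
      rw [hfind, hcast, pow_one]
    rw [hrem, this]

theorem sign_tau_le_succ (σ : Equiv.Perm (Fin (n+1))) :
    Equiv.Perm.sign σ
      = (if (finSuccEquivLast.permCongr σ) none = none then 1 else -1)
          * Equiv.Perm.sign (tau (Nat.le_succ n) σ) := by
  have h1 : Equiv.Perm.sign (finSuccEquivLast.permCongr σ) = Equiv.Perm.sign σ :=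
    Equiv.Perm.sign_permCongr _ _
  set e := finSuccEquivLast.permCongr σ with he
  have h2 : (Equiv.removeNone e).optionCongr = Equiv.swap none (e none) * e :=
    map_equiv_removeNone e
  have h3 : e = Equiv.swap none (e none) * (Equiv.removeNone e).optionCongr := by
    rw [h2, ← mul_assoc, Equiv.swap_mul_self, one_mul]
  have h4 : Equiv.Perm.sign e
      = (if none = e none then 1 else -1) * Equiv.Perm.sign (Equiv.removeNone e) := by
    conv_lhs => rw [h3]
    rw [map_mul, Equiv.Perm.sign_swap', Equiv.optionCongr_sign]
  rw [← h1, h4, removeNone_eq_tau]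
  congr 1
  by_cases hc : e none = none
  · simp [hc]
  · have hc' : ¬ (none = e none) := fun h => hc h.symm
    simp [hc, hc']

end delete

section counting

open Finset Equiv Equiv.Perm

noncomputable def cnt (m n : ℕ) (h : m ≤ n) (π : Equiv.Perm (Fin m)) (u : ℤˣ) : ℕ :=
  (Finset.univ.filter fun σ : Equiv.Perm (Fin n) =>
    Equiv.Perm.sign σ = u ∧ tau h σ = π).card

theorem tau_refl (m : ℕ) (σ : Equiv.Perm (Fin m)) : tau (le_refl m) σ = σ := by
  apply Equiv.ext
  intro i
  have hfind : Nat.find (exists_return (le_refl m) σ i) = 1 := by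
    apply find_eq
    · omega
    · exact ((σ ^ 1) (Fin.castLE (le_refl m) i)).isLt
    · intro j h0 h1 hc
      omega
  apply Fin.ext
  show (((σ ^ Nat.find (exists_return (le_refl m) σ i)) (Fin.castLE (le_refl m) i)
      : Fin m) : ℕ) = ((σ i : Fin m) : ℕ)
  rw [hfind, pow_one]
  rfl

theorem cnt_base (m : ℕ) (π : Equiv.Perm (Fin m)) (u : ℤˣ) :
    cnt m m (le_refl m) π u = if Equiv.Perm.sign π = u then 1 else 0 := by
  classical
  rw [cnt]
  have hfil : (Finset.univ.filter fun σ : Equiv.Perm (Fin m) =>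
      Equiv.Perm.sign σ = u ∧ tau (le_refl m) σ = π)
      = (Finset.univ.filter fun σ : Equiv.Perm (Fin m) =>
        Equiv.Perm.sign σ = u ∧ σ = π) := by
    apply Finset.filter_congr
    intro σ _
    rw [tau_refl]
  rw [hfil]
  split_ifs with hs
  · have : (Finset.univ.filter fun σ : Equiv.Perm (Fin m) =>
        Equiv.Perm.sign σ = u ∧ σ = π) = {π} := by
      ext σ
      simp only [Finset.mem_filter, Finset.mem_univ, true_and, Finset.mem_singleton]
      constructor
      · exact fun hh => hh.2
      · rintro rfl
        exact ⟨hs, rfl⟩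
    rw [this, Finset.card_singleton]
  · have : (Finset.univ.filter fun σ : Equiv.Perm (Fin m) =>
        Equiv.Perm.sign σ = u ∧ σ = π) = ∅ := by
      ext σ
      simp only [Finset.mem_filter, Finset.mem_univ, true_and, Finset.notMem_empty,
        iff_false, not_and]
      rintro h1 rfl
      exact hs h1
    rw [this, Finset.card_empty]

theorem cnt_succ (m n : ℕ) (h : m ≤ n) (h' : m ≤ n + 1) (π : Equiv.Perm (Fin m)) (u : ℤˣ) :
    cnt m (n+1) h' π u = cnt m n h π u + n * cnt m n h π (-u) := by
  classical
  have hcard : ∀ (N : ℕ) (hN : m ≤ N) (v : ℤˣ),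
      cnt m N hN π v = Fintype.card {σ : Equiv.Perm (Fin N) //
        Equiv.Perm.sign σ = v ∧ tau hN σ = π} := by
    intro N hN v
    rw [cnt, Fintype.card_subtype]
  let D : Equiv.Perm (Fin (n+1)) ≃ Option (Fin n) × Equiv.Perm (Fin n) :=
    (Equiv.permCongr finSuccEquivLast).trans Equiv.Perm.decomposeOption
  have hD2 : ∀ σ : Equiv.Perm (Fin (n+1)), (D σ).2 = tau (Nat.le_succ n) σ := by
    intro σ
    show Equiv.removeNone (finSuccEquivLast.permCongr σ) = tau (Nat.le_succ n) σ
    exact removeNone_eq_tau σ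
  have hD1 : ∀ σ : Equiv.Perm (Fin (n+1)), (D σ).1 = (finSuccEquivLast.permCongr σ) none :=
    fun σ => rfl
  have hiff : ∀ σ : Equiv.Perm (Fin (n+1)),
      (Equiv.Perm.sign σ = u ∧ tau h' σ = π)
        ↔ (Equiv.Perm.sign (D σ).2 = (if (D σ).1 = none then u else -u)
            ∧ tau h (D σ).2 = π) := by
    intro σ
    rw [hD2, hD1]
    have htr : tau h (tau (Nat.le_succ n) σ) = tau h' σ := tau_trans (Nat.le_succ n) σ h
    rw [htr]
    have hsg := sign_tau_le_succ σ
    constructor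
    · rintro ⟨h1, h2⟩
      refine ⟨?_, h2⟩
      by_cases hcnd : (finSuccEquivLast.permCongr σ) none = none
      · rw [if_pos hcnd]
        rw [hsg, if_pos hcnd, one_mul] at h1
        exact h1
      · rw [if_neg hcnd]
        rw [hsg, if_neg hcnd] at h1
        rw [← h1]
        simp
    · rintro ⟨h1, h2⟩
      refine ⟨?_, h2⟩
      rw [hsg]
      by_cases hcnd : (finSuccEquivLast.permCongr σ) none = none
      · rw [if_pos hcnd, one_mul]
        rw [if_pos hcnd] at h1
        exact h1
      · rw [if_neg hcnd]
        rw [if_neg hcnd] at h1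
        rw [h1]
        simp
  rw [hcard (n+1) h' u]
  have e1 := Fintype.card_congr (D.subtypeEquiv
    (p := fun σ : Equiv.Perm (Fin (n+1)) => Equiv.Perm.sign σ = u ∧ tau h' σ = π)
    (q := fun x : Option (Fin n) × Equiv.Perm (Fin n) =>
      Equiv.Perm.sign x.2 = (if x.1 = none then u else -u) ∧ tau h x.2 = π) hiff)
  rw [e1]
  have e2 := Fintype.card_congr (Equiv.subtypeProdEquivSigmaSubtype
    (fun (a : Option (Fin n)) (b : Equiv.Perm (Fin n)) =>
      Equiv.Perm.sign b = (if a = none then u else -u) ∧ tau h b = π))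
  rw [e2, Fintype.card_sigma, Fintype.sum_option]
  have hnone : Fintype.card {b : Equiv.Perm (Fin n) //
      Equiv.Perm.sign b = (if (none : Option (Fin n)) = none then u else -u) ∧ tau h b = π}
      = cnt m n h π u := by
    rw [hcard n h u]
    simp
  have hsome : ∀ a : Fin n, Fintype.card {b : Equiv.Perm (Fin n) //
      Equiv.Perm.sign b = (if (some a : Option (Fin n)) = none then u else -u) ∧ tau h b = π}
      = cnt m n h π (-u) := by
    intro a
    rw [hcard n h (-u)]
    simp
  rw [hnone]
  rw [Finset.sum_congr rfl (fun a _ => hsome a)]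
  rw [Finset.sum_const, Finset.card_univ, Fintype.card_fin, smul_eq_mul]

theorem cnt_total (m n : ℕ) (h : m ≤ n) (π : Equiv.Perm (Fin m)) :
    (cnt m n h π 1 + cnt m n h π (-1)) * m.factorial = n.factorial := by
  induction n, h using Nat.le_induction with
  | base =>
      rw [cnt_base, cnt_base]
      rcases Int.units_eq_one_or (Equiv.Perm.sign π) with hs | hs <;>
        simp [hs]
  | succ n hn ih =>
      rw [cnt_succ m n hn (by omega) π 1, cnt_succ m n hn (by omega) π (-1)]
      simp only [neg_neg]
      have : (cnt m n hn π 1 + n * cnt m n hn π (-1) + (cnt m n hn π (-1) + n * cnt m n hn π 1))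
          * m.factorial = (n + 1) * ((cnt m n hn π 1 + cnt m n hn π (-1)) * m.factorial) := by
        ring
      rw [this, ih, Nat.factorial_succ]

theorem cnt_diff (m n : ℕ) (h : m ≤ n) (π : Equiv.Perm (Fin m)) :
    (cnt m n h π 1 : ℤ) - (cnt m n h π (-1) : ℤ)
      = ((Equiv.Perm.sign π : ℤˣ) : ℤ) * ∏ k ∈ Finset.Ico m n, (1 - (k : ℤ)) := by
  induction n, h using Nat.le_induction with
  | base =>
      rw [Finset.Ico_self, Finset.prod_empty, mul_one]
      rcases Int.units_eq_one_or (Equiv.Perm.sign π) with hs | hs <;>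
        simp [cnt_base, hs]
  | succ n hn ih =>
      rw [cnt_succ m n hn (by omega) π 1, cnt_succ m n hn (by omega) π (-1)]
      simp only [neg_neg]
      rw [Finset.prod_Ico_succ_top hn]
      push_cast
      linear_combination (1 - (n : ℤ)) * ih

end counting

section main

open Finset Equiv Equiv.Perm

def Sprod (m n : ℕ) : ℤ := ∏ k ∈ Finset.Ico m n, (1 - (k : ℤ))

theorem num_eq {m n : ℕ} (h : m ≤ n) (E : Finset (Equiv.Perm (Fin m))) :
    (univ.filter fun σ : Equiv.Perm (Fin n) =>
      Equiv.Perm.sign σ = 1 ∧ tau h σ ∈ E).card = ∑ π ∈ E, cnt m n h π 1 := by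
  classical
  rw [Finset.card_eq_sum_card_fiberwise (f := fun σ => tau h σ) (t := E)
    (fun σ hσ => (Finset.mem_filter.mp hσ).2.2)]
  apply Finset.sum_congr rfl
  intro π hπ
  rw [cnt, Finset.filter_filter]
  congr 1
  apply Finset.filter_congr
  intro σ _
  constructor
  · rintro ⟨⟨h1, _⟩, h3⟩
    exact ⟨h1, h3⟩
  · rintro ⟨h1, h3⟩
    exact ⟨⟨h1, h3 ▸ hπ⟩, h3⟩

theorem den_eq {m n : ℕ} (h : m ≤ n) :
    (univ.filter fun σ : Equiv.Perm (Fin n) => Equiv.Perm.sign σ = 1).card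
      = ∑ π : Equiv.Perm (Fin m), cnt m n h π 1 := by
  classical
  rw [← num_eq h Finset.univ]
  congr 1
  apply Finset.filter_congr
  intro σ _
  simp

theorem card_evens (m : ℕ) (hm : 2 ≤ m) :
    2 * (univ.filter fun π : Equiv.Perm (Fin m) => Equiv.Perm.sign π = 1).card
      = m.factorial := by
  classical
  have hnt : Nontrivial (Fin m) := ⟨⟨⟨0, by omega⟩, ⟨1, by omega⟩, by simp [Fin.ext_iff]⟩⟩
  have h1 := @two_mul_card_alternatingGroup (Fin m) _ _ hnt
  rw [Fintype.card_perm, Fintype.card_fin] at h1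
  rw [← h1]
  congr 1
  calc (univ.filter fun π : Equiv.Perm (Fin m) => Equiv.Perm.sign π = 1).card
      = Fintype.card {π : Equiv.Perm (Fin m) // Equiv.Perm.sign π = 1} :=
        (Fintype.card_subtype _).symm
    _ = Fintype.card (alternatingGroup (Fin m)) :=
        Fintype.card_congr (Equiv.subtypeEquivRight
          (fun π => (Equiv.Perm.mem_alternatingGroup).symm))

theorem sum_sign_zero (m : ℕ) (hm : 2 ≤ m) :
    ∑ π : Equiv.Perm (Fin m), ((Equiv.Perm.sign π : ℤ)) = 0 := by
  classical
  rw [← Finset.sum_filter_add_sum_filter_not univ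
    (fun π : Equiv.Perm (Fin m) => Equiv.Perm.sign π = 1)]
  have h1 : ∑ π ∈ univ.filter (fun π : Equiv.Perm (Fin m) => Equiv.Perm.sign π = 1),
      ((Equiv.Perm.sign π : ℤ))
      = ((univ.filter (fun π : Equiv.Perm (Fin m) => Equiv.Perm.sign π = 1)).card : ℤ) := by
    rw [Finset.sum_congr rfl (fun π hπ => show ((Equiv.Perm.sign π : ℤ)) = 1 by
      rw [(Finset.mem_filter.mp hπ).2]; rfl)]
    simp
  have h2 : ∑ π ∈ univ.filter (fun π : Equiv.Perm (Fin m) => ¬ Equiv.Perm.sign π = 1),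
      ((Equiv.Perm.sign π : ℤ))
      = -((univ.filter (fun π : Equiv.Perm (Fin m) => ¬ Equiv.Perm.sign π = 1)).card : ℤ) := by
    rw [Finset.sum_congr rfl (fun π hπ => show ((Equiv.Perm.sign π : ℤ)) = -1 by
      rcases Int.units_eq_one_or (Equiv.Perm.sign π) with hs | hs
      · exact absurd hs (Finset.mem_filter.mp hπ).2
      · rw [hs]; rfl)]
    simp
  rw [h1, h2]
  have h3 : (univ.filter (fun π : Equiv.Perm (Fin m) => Equiv.Perm.sign π = 1)).card
      + (univ.filter (fun π : Equiv.Perm (Fin m) => ¬ Equiv.Perm.sign π = 1)).card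
      = (univ : Finset (Equiv.Perm (Fin m))).card := by
    simpa using Finset.card_filter_add_card_filter_not
      (s := (univ : Finset (Equiv.Perm (Fin m))))
      (p := fun π => Equiv.Perm.sign π = 1)
  have h4 : (univ : Finset (Equiv.Perm (Fin m))).card = m.factorial := by
    rw [Finset.card_univ, Fintype.card_perm, Fintype.card_fin]
  have h5 := card_evens m hm
  omega

theorem cnt1_eq {m n : ℕ} (h : m ≤ n) (π : Equiv.Perm (Fin m)) :
    (2 * (cnt m n h π 1 : ℤ)) * m.factorial
      = n.factorial + ((Equiv.Perm.sign π : ℤ)) * Sprod m n * m.factorial := by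
  have t := cnt_total m n h π
  have d := cnt_diff m n h π
  have t' : ((cnt m n h π 1 : ℤ) + (cnt m n h π (-1) : ℤ)) * (m.factorial : ℤ)
      = (n.factorial : ℤ) := by
    exact_mod_cast t
  rw [Sprod]
  linear_combination t' + (m.factorial : ℤ) * d

theorem S_zero_m1 {n : ℕ} (hn : 2 ≤ n) : Sprod 1 n = 0 := by
  rw [Sprod]
  apply Finset.prod_eq_zero (i := 1)
  · rw [Finset.mem_Ico]
    omega
  · norm_num

theorem two_den {m n : ℕ} (h : m ≤ n) (hm : 1 ≤ m) (hn : 2 ≤ n) :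
    (2 * ((univ.filter fun σ : Equiv.Perm (Fin n) =>
      Equiv.Perm.sign σ = 1).card : ℤ)) = n.factorial := by
  classical
  have key : (2 * ((univ.filter fun σ : Equiv.Perm (Fin n) =>
      Equiv.Perm.sign σ = 1).card : ℤ)) * m.factorial = (n.factorial : ℤ) * m.factorial := by
    rw [den_eq h]
    push_cast
    rw [Finset.mul_sum, Finset.sum_mul]
    rw [Finset.sum_congr rfl (fun π _ => cnt1_eq h π)]
    rw [Finset.sum_add_distrib, Finset.sum_const, Finset.card_univ, Fintype.card_perm,
      Fintype.card_fin, nsmul_eq_mul]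
    have hz : ∑ π : Equiv.Perm (Fin m), ((Equiv.Perm.sign π : ℤ)) * Sprod m n * m.factorial
        = 0 := by
      rcases Nat.lt_or_ge m 2 with hm2 | hm2
      · have hm1 : m = 1 := by omega
        subst hm1
        rw [Finset.sum_congr rfl (fun π _ => by rw [S_zero_m1 hn, mul_zero, zero_mul])]
        rw [Finset.sum_const, smul_zero]
      · rw [← Finset.sum_mul, ← Finset.sum_mul, sum_sign_zero m hm2, zero_mul, zero_mul]
    rw [hz, add_zero, mul_comm]
  have hfac : (m.factorial : ℤ) ≠ 0 := by
    exact_mod_cast m.factorial_pos.ne'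
  exact mul_right_cancel₀ hfac key

end main

section final

open Finset Equiv Equiv.Perm

theorem Q_fact (m : ℕ) (hm : 2 ≤ m) : ∀ n, m ≤ n →
    (∏ k ∈ Finset.Ico m n, (k - 1)) * (m - 2).factorial = (n - 2).factorial := by
  intro n h
  induction n, h using Nat.le_induction with
  | base => rw [Finset.Ico_self, Finset.prod_empty, one_mul]
  | succ n hn ih =>
      obtain ⟨t, rfl⟩ : ∃ t, n = t + 2 := ⟨n - 2, by omega⟩
      rw [Finset.prod_Ico_succ_top hn]
      have e1 : t + 2 - 1 = t + 1 := by omega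
      have e2 : t + 2 + 1 - 2 = t + 1 := by omega
      have e3 : t + 2 - 2 = t := by omega
      rw [e1, e2]
      rw [e3] at ih
      rw [Nat.factorial_succ, ← ih]
      ring

theorem abs_S {m n : ℕ} (hm : 2 ≤ m) :
    |Sprod m n| = ((∏ k ∈ Finset.Ico m n, (k - 1) : ℕ) : ℤ) := by
  rw [Sprod, Finset.abs_prod, Nat.cast_prod]
  apply Finset.prod_congr rfl
  intro k hk
  have hmk : m ≤ k := (Finset.mem_Ico.mp hk).1
  have h1 : |1 - (k : ℤ)| = (k : ℤ) - 1 := by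
    rw [abs_sub_comm]
    apply abs_of_nonneg
    have : (2 : ℤ) ≤ (k : ℤ) := by exact_mod_cast hm.trans hmk
    omega
  rw [h1, Nat.cast_sub (by omega : 1 ≤ k), Nat.cast_one]

theorem cnt1_real {m n : ℕ} (h : m ≤ n) (π : Equiv.Perm (Fin m)) :
    ((cnt m n h π 1 : ℝ)) * (2 * (m.factorial : ℝ))
      = (n.factorial : ℝ)
        + ((Equiv.Perm.sign π : ℤ) : ℝ) * ((Sprod m n : ℤ) : ℝ) * (m.factorial : ℝ) := by
  have hz := cnt1_eq h π
  have hc := congrArg (fun z : ℤ => (z : ℝ)) hz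
  push_cast at hc
  linarith

theorem key_identity {m n : ℕ} (h : m ≤ n) (hm : 1 ≤ m) (hn : 2 ≤ n)
    (E : Finset (Equiv.Perm (Fin m))) :
    ((univ.filter (fun σ : Equiv.Perm (Fin n) =>
        Equiv.Perm.sign σ = 1 ∧ tau h σ ∈ E)).card : ℝ) /
      ((univ.filter (fun σ : Equiv.Perm (Fin n) => Equiv.Perm.sign σ = 1)).card : ℝ) -
      (E.card : ℝ) / (Fintype.card (Equiv.Perm (Fin m)) : ℝ)
    = ((Sprod m n : ℤ) : ℝ) / (n.factorial : ℝ)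
        * ∑ π ∈ E, (((Equiv.Perm.sign π : ℤ)) : ℝ) := by
  classical
  have hden : ((univ.filter (fun σ : Equiv.Perm (Fin n) =>
      Equiv.Perm.sign σ = 1)).card : ℝ) = (n.factorial : ℝ) / 2 := by
    have h1 := two_den h hm hn
    have h2 : (2 : ℝ) * ((univ.filter (fun σ : Equiv.Perm (Fin n) =>
        Equiv.Perm.sign σ = 1)).card : ℝ) = (n.factorial : ℝ) := by
      exact_mod_cast h1
    linarith
  have hm0 : (m.factorial : ℝ) ≠ 0 := by
    exact_mod_cast m.factorial_pos.ne'
  have hn0 : (n.factorial : ℝ) ≠ 0 := by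
    exact_mod_cast n.factorial_pos.ne'
  have hnum : ((univ.filter (fun σ : Equiv.Perm (Fin n) =>
      Equiv.Perm.sign σ = 1 ∧ tau h σ ∈ E)).card : ℝ)
      = ((E.card : ℝ) * (n.factorial : ℝ)
        + (∑ π ∈ E, (((Equiv.Perm.sign π : ℤ)) : ℝ)) * ((Sprod m n : ℤ) : ℝ)
            * (m.factorial : ℝ)) / (2 * (m.factorial : ℝ)) := by
    rw [eq_div_iff (by positivity)]
    rw [num_eq h E]
    push_cast
    rw [Finset.sum_mul]
    rw [Finset.sum_congr rfl (fun π _ => cnt1_real h π)]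
    rw [Finset.sum_add_distrib, Finset.sum_const, nsmul_eq_mul]
    rw [← Finset.sum_mul, ← Finset.sum_mul]
  rw [hnum, hden, Fintype.card_perm, Fintype.card_fin]
  field_simp
  ring

theorem T_bound {m : ℕ} (hm : 2 ≤ m) (E : Finset (Equiv.Perm (Fin m))) :
    |∑ π ∈ E, (((Equiv.Perm.sign π : ℤ)) : ℝ)| * 2 ≤ (m.factorial : ℝ) := by
  classical
  have hsplit := Finset.sum_filter_add_sum_filter_not E
    (fun π => Equiv.Perm.sign π = 1) (fun π => (((Equiv.Perm.sign π : ℤ)) : ℝ))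
  have h1 : ∑ π ∈ E.filter (fun π => Equiv.Perm.sign π = 1),
      (((Equiv.Perm.sign π : ℤ)) : ℝ)
      = ((E.filter (fun π => Equiv.Perm.sign π = 1)).card : ℝ) := by
    rw [Finset.sum_congr rfl (fun π hπ => show (((Equiv.Perm.sign π : ℤ)) : ℝ) = 1 by
      rw [(Finset.mem_filter.mp hπ).2]; norm_num)]
    simp
  have h2 : ∑ π ∈ E.filter (fun π => ¬ Equiv.Perm.sign π = 1),
      (((Equiv.Perm.sign π : ℤ)) : ℝ)
      = -((E.filter (fun π => ¬ Equiv.Perm.sign π = 1)).card : ℝ) := by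
    rw [Finset.sum_congr rfl (fun π hπ => show (((Equiv.Perm.sign π : ℤ)) : ℝ) = -1 by
      rcases Int.units_eq_one_or (Equiv.Perm.sign π) with hs | hs
      · exact absurd hs (Finset.mem_filter.mp hπ).2
      · rw [hs]; norm_num)]
    simp
  have ha : (E.filter (fun π => Equiv.Perm.sign π = 1)).card
      ≤ (univ.filter (fun π : Equiv.Perm (Fin m) => Equiv.Perm.sign π = 1)).card :=
    Finset.card_le_card (Finset.filter_subset_filter _ (Finset.subset_univ E))
  have hb : (E.filter (fun π => ¬ Equiv.Perm.sign π = 1)).card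
      ≤ (univ.filter (fun π : Equiv.Perm (Fin m) => ¬ Equiv.Perm.sign π = 1)).card :=
    Finset.card_le_card (Finset.filter_subset_filter _ (Finset.subset_univ E))
  have h3 : (univ.filter (fun π : Equiv.Perm (Fin m) => Equiv.Perm.sign π = 1)).card
      + (univ.filter (fun π : Equiv.Perm (Fin m) => ¬ Equiv.Perm.sign π = 1)).card
      = (univ : Finset (Equiv.Perm (Fin m))).card := by
    simpa using Finset.card_filter_add_card_filter_not
      (s := (univ : Finset (Equiv.Perm (Fin m))))
      (p := fun π => Equiv.Perm.sign π = 1)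
  have h4 : (univ : Finset (Equiv.Perm (Fin m))).card = m.factorial := by
    rw [Finset.card_univ, Fintype.card_perm, Fintype.card_fin]
  have h5 := card_evens m hm
  have haN : (E.filter (fun π => Equiv.Perm.sign π = 1)).card * 2 ≤ m.factorial := by omega
  have hbN : (E.filter (fun π => ¬ Equiv.Perm.sign π = 1)).card * 2 ≤ m.factorial := by omega
  have haR : ((E.filter (fun π => Equiv.Perm.sign π = 1)).card : ℝ) * 2
      ≤ (m.factorial : ℝ) := by exact_mod_cast haN
  have hbR : ((E.filter (fun π => ¬ Equiv.Perm.sign π = 1)).card : ℝ) * 2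
      ≤ (m.factorial : ℝ) := by exact_mod_cast hbN
  have hT : ∑ π ∈ E, (((Equiv.Perm.sign π : ℤ)) : ℝ)
      = ((E.filter (fun π => Equiv.Perm.sign π = 1)).card : ℝ)
        - ((E.filter (fun π => ¬ Equiv.Perm.sign π = 1)).card : ℝ) := by
    rw [← hsplit, h1, h2]
    ring
  rw [hT]
  have hub := abs_le.mpr (⟨by
      have : (0:ℝ) ≤ ((E.filter (fun π => Equiv.Perm.sign π = 1)).card : ℝ) := by positivity
      linarith, by
      have : (0:ℝ) ≤ ((E.filter (fun π => ¬ Equiv.Perm.sign π = 1)).card : ℝ) := by positivity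
      linarith⟩ :
    -((m.factorial : ℝ)/2) ≤ ((E.filter (fun π => Equiv.Perm.sign π = 1)).card : ℝ)
        - ((E.filter (fun π => ¬ Equiv.Perm.sign π = 1)).card : ℝ) ∧
      ((E.filter (fun π => Equiv.Perm.sign π = 1)).card : ℝ)
        - ((E.filter (fun π => ¬ Equiv.Perm.sign π = 1)).card : ℝ) ≤ (m.factorial : ℝ)/2)
  linarith

theorem AR {m n : ℕ} (hm : 2 ≤ m) (h : m ≤ n) :
    ((∏ k ∈ Finset.Ico m n, (k - 1) : ℕ) : ℝ) / (n.factorial : ℝ) * ((m.factorial : ℝ) / 2)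
      = (m : ℝ) * ((m : ℝ) - 1) / (2 * (n : ℝ) * ((n : ℝ) - 1)) := by
  obtain ⟨a, rfl⟩ : ∃ a, m = a + 2 := ⟨m - 2, by omega⟩
  obtain ⟨b, rfl⟩ : ∃ b, n = b + 2 := ⟨n - 2, by omega⟩
  have hQ := Q_fact (a+2) hm (b+2) h
  simp only [Nat.add_sub_cancel] at hQ
  set Q : ℝ := ((∏ k ∈ Finset.Ico (a+2) (b+2), (k - 1) : ℕ) : ℝ) with hQdef
  have hQR : Q * (a.factorial : ℝ) = (b.factorial : ℝ) := by
    rw [hQdef]; exact_mod_cast hQ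
  have hfa : (0:ℝ) < (a.factorial : ℝ) := by exact_mod_cast a.factorial_pos
  have hfb : (0:ℝ) < (b.factorial : ℝ) := by exact_mod_cast b.factorial_pos
  have e1 : ((a+2).factorial : ℝ) = ((a:ℝ)+2) * (((a:ℝ)+1) * (a.factorial : ℝ)) := by
    rw [show a+2 = (a+1)+1 from rfl, Nat.factorial_succ, Nat.factorial_succ]
    push_cast
    ring
  have e2 : ((b+2).factorial : ℝ) = ((b:ℝ)+2) * (((b:ℝ)+1) * (b.factorial : ℝ)) := by
    rw [show b+2 = (b+1)+1 from rfl, Nat.factorial_succ, Nat.factorial_succ]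
    push_cast
    ring
  have e3 : ((a:ℝ) + 2) - 1 = (a:ℝ) + 1 := by ring
  have e4 : ((b:ℝ) + 2) - 1 = (b:ℝ) + 1 := by ring
  rw [e1, e2]
  push_cast
  rw [e3, e4]
  rw [div_mul_eq_mul_div, div_eq_div_iff (by positivity) (by positivity)]
  linear_combination (((a:ℝ)+2)*((a:ℝ)+1)*((b:ℝ)+2)*((b:ℝ)+1)) * hQR

end final

open Finset in
/-- The total variation distance between the law of `τ_m(σ)` (for `σ` uniform on the
even permutations of `{1,…,n}`) and the uniform distribution on `S_m`:
the supremum over sets `E` of permutations of `|P(τ ∈ E) − |E|/m!|`. -/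
noncomputable def tauTV (n m : ℕ) (h : m ≤ n) : ℝ :=
  Finset.univ.sup' Finset.univ_nonempty
    (fun E : Finset (Equiv.Perm (Fin m)) =>
      |((univ.filter (fun σ : Equiv.Perm (Fin n) =>
            Equiv.Perm.sign σ = 1 ∧ tau h σ ∈ E)).card : ℝ) /
          ((univ.filter (fun σ : Equiv.Perm (Fin n) => Equiv.Perm.sign σ = 1)).card : ℝ) -
        (E.card : ℝ) / (Fintype.card (Equiv.Perm (Fin m)) : ℝ)|)

section wrapup

open Finset Equiv Equiv.Perm

theorem sup'_eq_of {α : Type*} (s : Finset α) (hs : s.Nonempty) (f : α → ℝ) (v : ℝ)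
    (hub : ∀ a ∈ s, f a ≤ v) (hwit : ∃ a ∈ s, f a = v) : s.sup' hs f = v := by
  obtain ⟨a, ha, hfa⟩ := hwit
  exact le_antisymm (Finset.sup'_le hs f hub) (hfa ▸ Finset.le_sup' f ha)

theorem sum_one_eq_card {m : ℕ} (E : Finset (Equiv.Perm (Fin m)))
    (hE : ∀ π ∈ E, Equiv.Perm.sign π = 1) :
    ∑ π ∈ E, (((Equiv.Perm.sign π : ℤ)) : ℝ) = (E.card : ℝ) := by
  rw [Finset.sum_congr rfl (fun π hπ => show (((Equiv.Perm.sign π : ℤ)) : ℝ) = 1 by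
    rw [hE π hπ]; norm_num)]
  simp

theorem tauTV_formula (n m : ℕ) (hn : 2 ≤ n) (hm : 1 ≤ m) (h : m ≤ n) :
    tauTV n m h = (m : ℝ) * ((m : ℝ) - 1) / (2 * (n : ℝ) * ((n : ℝ) - 1)) := by
  classical
  rw [tauTV]
  apply sup'_eq_of
  · intro E _
    rw [key_identity h hm hn E, abs_mul]
    rcases Nat.lt_or_ge m 2 with hm2 | hm2
    · have hm1 : m = 1 := by omega
      subst hm1
      rw [S_zero_m1 hn]
      norm_num
    · have habs : |((Sprod m n : ℤ) : ℝ) / (n.factorial : ℝ)|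
          = ((∏ k ∈ Finset.Ico m n, (k - 1) : ℕ) : ℝ) / (n.factorial : ℝ) := by
        rw [abs_div, ← Int.cast_abs, abs_S hm2,
          abs_of_nonneg (by positivity : (0:ℝ) ≤ (n.factorial : ℝ))]
        push_cast
        ring
      rw [habs]
      have hTb := T_bound hm2 E
      calc ((∏ k ∈ Finset.Ico m n, (k - 1) : ℕ) : ℝ) / (n.factorial : ℝ)
            * |∑ π ∈ E, (((Equiv.Perm.sign π : ℤ)) : ℝ)|
          ≤ ((∏ k ∈ Finset.Ico m n, (k - 1) : ℕ) : ℝ) / (n.factorial : ℝ)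
            * ((m.factorial : ℝ) / 2) := by
            apply mul_le_mul_of_nonneg_left (by linarith) (by positivity)
        _ = (m : ℝ) * ((m : ℝ) - 1) / (2 * (n : ℝ) * ((n : ℝ) - 1)) := AR hm2 h
  · refine ⟨univ.filter (fun π : Equiv.Perm (Fin m) => Equiv.Perm.sign π = 1),
      Finset.mem_univ _, ?_⟩
    rw [key_identity h hm hn _, abs_mul]
    have hT0 := sum_one_eq_card (univ.filter (fun π : Equiv.Perm (Fin m) =>
      Equiv.Perm.sign π = 1)) (fun π hπ => (Finset.mem_filter.mp hπ).2)
    rcases Nat.lt_or_ge m 2 with hm2 | hm2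
    · have hm1 : m = 1 := by omega
      subst hm1
      rw [S_zero_m1 hn]
      norm_num
    · have habs : |((Sprod m n : ℤ) : ℝ) / (n.factorial : ℝ)|
          = ((∏ k ∈ Finset.Ico m n, (k - 1) : ℕ) : ℝ) / (n.factorial : ℝ) := by
        rw [abs_div, ← Int.cast_abs, abs_S hm2,
          abs_of_nonneg (by positivity : (0:ℝ) ≤ (n.factorial : ℝ))]
        push_cast
        ring
      rw [habs, hT0, abs_of_nonneg (by positivity :
        (0:ℝ) ≤ ((univ.filter (fun π : Equiv.Perm (Fin m) =>
          Equiv.Perm.sign π = 1)).card : ℝ))]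
      have hcard : ((univ.filter (fun π : Equiv.Perm (Fin m) =>
          Equiv.Perm.sign π = 1)).card : ℝ) = (m.factorial : ℝ) / 2 := by
        have h5 := card_evens m hm2
        have : (2:ℝ) * ((univ.filter (fun π : Equiv.Perm (Fin m) =>
            Equiv.Perm.sign π = 1)).card : ℝ) = (m.factorial : ℝ) := by
          exact_mod_cast h5
        linarith
      rw [hcard]
      exact AR hm2 h

theorem tauTV_zero (n : ℕ) (h : (0:ℕ) ≤ n) : tauTV n 0 h = 0 := by
  classical
  rw [tauTV]
  have hden_pos : 0 < ((univ.filter fun σ : Equiv.Perm (Fin n) =>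
      Equiv.Perm.sign σ = 1).card) :=
    Finset.card_pos.mpr ⟨1, Finset.mem_filter.mpr ⟨Finset.mem_univ _, Equiv.Perm.sign_one⟩⟩
  have hempty : (univ.filter fun σ : Equiv.Perm (Fin n) =>
      Equiv.Perm.sign σ = 1 ∧ tau h σ ∈ (∅ : Finset (Equiv.Perm (Fin 0)))) = ∅ := by
    ext σ
    simp
  apply sup'_eq_of
  · intro E _
    rcases Finset.eq_empty_or_nonempty E with rfl | ⟨x, hx⟩
    · rw [hempty]
      simp
    · have hEuniv : E = univ := by
        apply Finset.eq_univ_iff_forall.mpr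
        intro y
        have hyx : y = x := Equiv.ext (fun z => z.elim0)
        rwa [hyx]
      subst hEuniv
      have h1 : (univ.filter fun σ : Equiv.Perm (Fin n) =>
          Equiv.Perm.sign σ = 1 ∧ tau h σ ∈ (univ : Finset (Equiv.Perm (Fin 0))))
          = (univ.filter fun σ : Equiv.Perm (Fin n) => Equiv.Perm.sign σ = 1) := by
        apply Finset.filter_congr
        intro σ _
        simp
        intro _
        exact Equiv.ext fun z => z.elim0
      rw [h1]
      have hdenR : ((univ.filter fun σ : Equiv.Perm (Fin n) =>
          Equiv.Perm.sign σ = 1).card : ℝ) ≠ 0 := by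
        exact_mod_cast hden_pos.ne'
      rw [div_self hdenR]
      have hc1 : (univ : Finset (Equiv.Perm (Fin 0))).card = 1 := by
        rw [Finset.card_univ, Fintype.card_perm, Fintype.card_fin, Nat.factorial_zero]
      have hc2 : Fintype.card (Equiv.Perm (Fin 0)) = 1 := by
        rw [Fintype.card_perm, Fintype.card_fin, Nat.factorial_zero]
      rw [hc1, hc2]
      norm_num
  · refine ⟨∅, Finset.mem_univ _, ?_⟩
    rw [hempty]
    simp

theorem tauTV_nonneg (n m : ℕ) (h : m ≤ n) : 0 ≤ tauTV n m h := by
  rw [tauTV]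
  have h0 := Finset.le_sup' (fun E : Finset (Equiv.Perm (Fin m)) =>
    |((Finset.univ.filter (fun σ : Equiv.Perm (Fin n) =>
        Equiv.Perm.sign σ = 1 ∧ tau h σ ∈ E)).card : ℝ) /
      ((Finset.univ.filter (fun σ : Equiv.Perm (Fin n) =>
        Equiv.Perm.sign σ = 1)).card : ℝ) -
      (E.card : ℝ) / (Fintype.card (Equiv.Perm (Fin m)) : ℝ)|)
    (Finset.mem_univ (∅ : Finset (Equiv.Perm (Fin m))))
  exact le_trans (abs_nonneg _) h0

theorem tauTV_le_sq (n M : ℕ) (h : M ≤ n) (hn : 2 ≤ n) :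
    tauTV n M h ≤ ((M : ℝ) / (n : ℝ))^2 := by
  rcases Nat.eq_zero_or_pos M with rfl | hM
  · rw [tauTV_zero n h]
    positivity
  · rw [tauTV_formula n M hn hM h]
    have hn2 : (2:ℝ) ≤ (n:ℝ) := by exact_mod_cast hn
    have hM1 : (1:ℝ) ≤ (M:ℝ) := by exact_mod_cast hM
    have hMn : (M:ℝ) ≤ (n:ℝ) := by exact_mod_cast h
    have hpos : 0 < 2 * (n:ℝ) * ((n:ℝ) - 1) := by nlinarith
    rw [div_pow, div_le_div_iff₀ hpos (by positivity)]
    have h1 : (0:ℝ) ≤ (M:ℝ) * (n:ℝ) * ((M:ℝ) * ((n:ℝ) - 2) + (n:ℝ)) := by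
      apply mul_nonneg (mul_nonneg (by linarith) (by linarith))
      nlinarith
    nlinarith [h1]

end wrapup

/-- For `1 ≤ m ≤ n`, `n ≥ 2`, and `σ` uniform on the even permutations
of `{1,…,n}`, the total variation distance between the law of `τ = τ_m(σ)` and the
uniform distribution on `S_m` equals `m(m−1)/(2n(n−1))`; in particular, for `m = m(n)`
with `m(n)/n → 0` (e.g. `m` fixed), `τ` converges in total variation to a uniformly
random permutation of `{1,…,m}`. -/
theorem stmt_13 :
    (∀ n m : ℕ, ∀ (_ : 2 ≤ n) (_ : 1 ≤ m) (hmn : m ≤ n),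
        tauTV n m hmn
          = (m : ℝ) * ((m : ℝ) - 1) / (2 * (n : ℝ) * ((n : ℝ) - 1))) ∧
      ∀ (m : ℕ → ℕ) (hmn : ∀ n, m n ≤ n),
        Filter.Tendsto (fun n : ℕ => (m n : ℝ) / (n : ℝ)) Filter.atTop (nhds 0) →
        Filter.Tendsto (fun n : ℕ => tauTV n (m n) (hmn n)) Filter.atTop (nhds 0) := by
  refine ⟨fun n m hn hm hmn => tauTV_formula n m hn hm hmn, ?_⟩
  intro m hmn hto
  have hsq : Filter.Tendsto (fun n : ℕ => ((m n : ℝ) / (n : ℝ))^2) Filter.atTop (nhds 0) := by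
    have h2 := hto.mul hto
    rw [mul_zero] at h2
    have hfun : (fun n : ℕ => ((m n : ℝ) / (n : ℝ))^2)
        = fun n : ℕ => ((m n : ℝ) / (n : ℝ)) * ((m n : ℝ) / (n : ℝ)) := by
      funext n
      ring
    rw [hfun]
    exact h2
  refine tendsto_of_tendsto_of_tendsto_of_le_of_le' tendsto_const_nhds hsq ?_ ?_
  · exact Filter.Eventually.of_forall (fun n => tauTV_nonneg n (m n) (hmn n))
  · filter_upwards [Filter.eventually_ge_atTop 2] with n hn
    exact tauTV_le_sq n (m n) (hmn n) hn
end
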